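/- arXiv:1810.05850 — 6 statements merged into one kernel-verified Lean document; each statement's English description precedes it below -/
import Mathlib

section
/- Let G be a group, N ⊴ G a normal subgroup, and ξ ∈ G an element such that N and ξ generate G. Let (α,u) be a cocycle action of G on a unital C*-algebra A with u(g,h) = 1 for all g,h ∈ N. Then the unitaries ǔ_g := u(ξ, ξ⁻¹gξ) u(g,ξ)* for g ∈ N form an α|N-cocycle (that is, ǔ_g α_g(ǔ_h) = ǔ_{gh} for all g,h ∈ N), and moreover α_ξ ∘ α_{ξ⁻¹gξ} ∘ α_ξ⁻¹ = Ad ǔ_g ∘ α_g for all g ∈ N. -/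
/-- A cocycle action `(α, u)` of `G` on a unital C*-algebra `A`, stated elementwise. -/
def IsCocycleActionFun {G A : Type*} [Group G] [NormedRing A] [StarRing A] [CStarRing A]
    [NormedAlgebra ℂ A] [CompleteSpace A] [StarModule ℂ A]
    (α : G → A → A) (u : G → G → A) : Prop :=
  (∀ g h, u g h ∈ unitary A) ∧
  (∀ g h a, α g (α h a) = u g h * α (g * h) a * star (u g h)) ∧
  (∀ g h k, u g h * u (g * h) k = α g (u h k) * u g (h * k)) ∧
  (∀ a, α 1 a = a) ∧
  (∀ g, u g 1 = 1 ∧ u 1 g = 1)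

/-- Let `N ⊴ G`, `ξ ∈ G` with `N` and `ξ` generating `G`, and let `(α,u)` be a cocycle
action of `G` on a unital C*-algebra `A` with `u(g,h) = 1` for `g,h ∈ N`.  Then the
unitaries `ǔ_g = u(ξ, ξ⁻¹gξ) u(g,ξ)*` (`g ∈ N`) form an `α|N`-cocycle and
`α_ξ ∘ α_{ξ⁻¹gξ} ∘ α_ξ⁻¹ = Ad ǔ_g ∘ α_g` for all `g ∈ N`. -/
theorem check_cocycle {G A : Type*} [Group G]
    [NormedRing A] [StarRing A] [CStarRing A]
    [NormedAlgebra ℂ A] [CompleteSpace A] [StarModule ℂ A]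
    (N : Subgroup G) (hN : N.Normal) (ξ : G)
    (hgen : Subgroup.closure ((N : Set G) ∪ {ξ}) = ⊤)
    (α : G → A ≃⋆ₐ[ℂ] A) (u : G → G → A)
    (hcc : IsCocycleActionFun (fun g a => α g a) u)
    (huN : ∀ g ∈ N, ∀ h ∈ N, u g h = 1) :
    (∀ g ∈ N, (u ξ (ξ⁻¹ * g * ξ) * star (u g ξ)) ∈ unitary A) ∧
    (∀ g ∈ N, ∀ h ∈ N,
      (u ξ (ξ⁻¹ * g * ξ) * star (u g ξ)) * α g (u ξ (ξ⁻¹ * h * ξ) * star (u h ξ)) =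
        u ξ (ξ⁻¹ * (g * h) * ξ) * star (u (g * h) ξ)) ∧
    (∀ g ∈ N, ∀ a : A,
      α ξ (α (ξ⁻¹ * g * ξ) ((α ξ).symm a)) =
        (u ξ (ξ⁻¹ * g * ξ) * star (u g ξ)) * α g a *
          star (u ξ (ξ⁻¹ * g * ξ) * star (u g ξ))) := by
  obtain ⟨hU, hAd, hCoc, hOne, hUnit⟩ := hcc
  have hconj : ∀ g ∈ N, ξ⁻¹ * g * ξ ∈ N := by
    intro g hg
    have := hN.conj_mem g hg ξ⁻¹
    simpa [mul_assoc] using this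
  refine ⟨?_, ?_, ?_⟩
  · intro g hg
    exact mul_mem (hU ξ (ξ⁻¹ * g * ξ)) (Unitary.star_mem (hU g ξ))
  · intro g hg h hh
    have hcg : ξ * (ξ⁻¹ * g * ξ) = g * ξ := by group
    have hch : ξ * (ξ⁻¹ * h * ξ) = h * ξ := by group
    have hprod : (ξ⁻¹ * g * ξ) * (ξ⁻¹ * h * ξ) = ξ⁻¹ * (g * h) * ξ := by group
    have hs : star (u g ξ) * u g ξ = 1 := (Unitary.mem_iff.mp (hU g ξ)).1
    have hs2 : u g (h * ξ) * star (u g (h * ξ)) = 1 := (Unitary.mem_iff.mp (hU g (h * ξ))).2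
    have E1 : u ξ (ξ⁻¹ * g * ξ) * u (g * ξ) (ξ⁻¹ * h * ξ) = u ξ (ξ⁻¹ * (g * h) * ξ) := by
      have h1 := hCoc ξ (ξ⁻¹ * g * ξ) (ξ⁻¹ * h * ξ)
      rw [hcg, hprod, huN _ (hconj g hg) _ (hconj h hh)] at h1
      simpa using h1
    have E2 : u (g * ξ) (ξ⁻¹ * h * ξ) = star (u g ξ) * (α g (u ξ (ξ⁻¹ * h * ξ)) * u g (h * ξ)) := by
      have h2 := hCoc g ξ (ξ⁻¹ * h * ξ)
      rw [hch] at h2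
      rw [← h2, ← mul_assoc, hs, one_mul]
    have E3 : u (g * h) ξ = α g (u h ξ) * u g (h * ξ) := by
      have h3 := hCoc g h ξ
      rw [huN g hg h hh, one_mul] at h3
      simpa using h3
    rw [← E1, E3, E2, map_mul, map_star, star_mul]
    calc u ξ (ξ⁻¹ * g * ξ) * star (u g ξ) * (α g (u ξ (ξ⁻¹ * h * ξ)) * star (α g (u h ξ)))
        = u ξ (ξ⁻¹ * g * ξ) * (star (u g ξ) * (α g (u ξ (ξ⁻¹ * h * ξ)) *
            ((u g (h * ξ) * star (u g (h * ξ))) * star (α g (u h ξ))))) := by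
          rw [hs2]; simp [mul_assoc]
      _ = u ξ (ξ⁻¹ * g * ξ) * (star (u g ξ) * (α g (u ξ (ξ⁻¹ * h * ξ)) * u g (h * ξ))) *
            (star (u g (h * ξ)) * star (α g (u h ξ))) := by simp [mul_assoc]
  · intro g hg a
    have hcg : ξ * (ξ⁻¹ * g * ξ) = g * ξ := by group
    have hs : star (u g ξ) * u g ξ = 1 := (Unitary.mem_iff.mp (hU g ξ)).1
    have hs' : u g ξ * star (u g ξ) = 1 := (Unitary.mem_iff.mp (hU g ξ)).2
    have h1 := hAd ξ (ξ⁻¹ * g * ξ) ((α ξ).symm a)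
    rw [hcg] at h1
    have h2 := hAd g ξ ((α ξ).symm a)
    simp only at h1 h2
    rw [(α ξ).apply_symm_apply] at h2
    have h3 : α (g * ξ) ((α ξ).symm a) = star (u g ξ) * α g a * u g ξ := by
      rw [h2, ← mul_assoc, ← mul_assoc, hs, one_mul, mul_assoc, hs, mul_one]
    rw [h1, h3, star_mul, star_star]
    simp [mul_assoc]
end

section
/- Let G be a group acting by automorphisms α_g on a group U, let M be a G-module, and let K : U → M be a group homomorphism with K(α_g(v)) = g·K(v) and K(wvw⁻¹) = K(v) for all g ∈ G, v,w ∈ U. Let u : G × G → U satisfy the cocycle-action conditions: α_g(α_h(x)) = u(g,h) α_{gh}(x) u(g,h)⁻¹ for all x ∈ U, and u(g,h)u(gh,k) = α_g(u(h,k))u(g,hk). Then ω(g,h,k) := K(α_g(u(h,k)) u(g,hk) u(gh,k)⁻¹ u(g,h)⁻¹) defines a 3-cocycle on G with values in M, i.e. g·ω(h,k,l) − ω(gh,k,l) + ω(g,hk,l) − ω(g,h,kl) + ω(g,h,k) = 0 for all g,h,k,l ∈ G. -/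
/-- Let `G` act by automorphisms `α_g` on a group `U` (not necessarily a homomorphism
`G → Aut U`), let `M` be a `G`-module and `K : U → M` a conjugation-invariant,
`G`-equivariant homomorphism.  If `u : G × G → U` satisfies the cocycle-action
conditions `α_g ∘ α_h = Ad u(g,h) ∘ α_{gh}` and
`u(g,h)u(gh,k) = α_g(u(h,k))u(g,hk)`, then
`ω(g,h,k) = K(α_g(u(h,k)) u(g,hk) u(gh,k)⁻¹ u(g,h)⁻¹)` is a 3-cocycle. -/
theorem kappa3_is_three_cocycle {G U M : Type*} [Group G] [Group U]
    [AddCommGroup M] [DistribMulAction G M]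
    (α : G → MulAut U) (K : U → M)
    (hKmul : ∀ v w : U, K (v * w) = K v + K w)
    (hKequiv : ∀ (g : G) (v : U), K (α g v) = g • K v)
    (hKconj : ∀ v w : U, K (w * v * w⁻¹) = K v)
    (u : G → G → U)
    (hα : ∀ (g h : G) (x : U), α g (α h x) = u g h * α (g * h) x * (u g h)⁻¹)
    (hu : ∀ g h k : G, u g h * u (g * h) k = α g (u h k) * u g (h * k)) :
    ∀ g h k l : G,
      g • K (α h (u k l) * u h (k * l) * (u (h * k) l)⁻¹ * (u h k)⁻¹)
        - K (α (g * h) (u k l) * u (g * h) (k * l) * (u (g * h * k) l)⁻¹ * (u (g * h) k)⁻¹)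
        + K (α g (u (h * k) l) * u g (h * k * l) * (u (g * (h * k)) l)⁻¹ * (u g (h * k))⁻¹)
        - K (α g (u h (k * l)) * u g (h * (k * l)) * (u (g * h) (k * l))⁻¹ * (u g h)⁻¹)
        + K (α g (u h k) * u g (h * k) * (u (g * h) k)⁻¹ * (u g h)⁻¹) = 0 := by
  intro g h k l
  have hK1 : K 1 = 0 := by
    have := hKmul 1 1; simpa using this
  have hKinv : ∀ v : U, K v⁻¹ = - K v := by
    intro v
    have := hKmul v v⁻¹
    simp [hK1] at this
    exact eq_neg_of_add_eq_zero_right this.symm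
  simp only [hKmul, hKinv, hKequiv, smul_add, smul_neg, mul_smul, mul_assoc]
  abel
end

section
/- Let G be a group, N ⊴ G a normal subgroup with G/N ≅ Z, and ξ ∈ G an element generating G together with N (so every element of G is uniquely of the form gξˡ with g ∈ N, l ∈ Z). Let M be a G-module and ρ : N → M a 1-cocycle (ρ(gh) = ρ(g) + g·ρ(h)). Then there exists a unique family of 1-cocycles (ρ_l : N → M)_{l∈Z} with ρ₀ = 0, ρ₁ = ρ, and ρ_{l+m} = ρ_l + ξˡρ_m for all l,m ∈ Z, where (ξˡρ_m)(g) := ξˡ·ρ_m(ξ⁻ˡgξˡ). Moreover the map ω : G² → M defined by ω(g₁ξ^{l₁}, g₂ξ^{l₂}) = g₁·ρ_{l₁}(ξ^{l₁} g₂ ξ^{−l₁}) is a 2-cocycle on G. -/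
/-!
The relation `ρ_{l+m} = ρ_l + ξ^l ρ_m` says that `l ↦ ρ_l` is a 1-cocycle of `ℤ` with values in
the cochains `N → M`, on which `ℤ` acts through translation by powers of `ξ`. Such a cocycle is
determined by its value at `1`, and one with value `ρ` is `l ↦ σ^l 0` for the affine bijection
`σ f = ξ f + ρ`: the identity `σ^l f = ξ^l f + σ^l 0` turns `σ^{l+m} = σ^l σ^m` into the
cocycle relation. Translation preserves 1-cocycles on `N`, hence so does the whole family.
Writing elements of `G` as `g ξ^a`, the 2-cocycle identity for `ω` then follows from the cocycle
property of `ρ_a` and the relation `ρ_{a+b} = ρ_a + ξ^a ρ_b`.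
-/

section IntCocycle

variable {H A : Type*} [Group H] [AddCommGroup A] (φ : H →* AddMonoid.End A)

lemma MonoidHom.apply_apply_eq_mul_apply (h k : H) (y : A) : φ h (φ k y) = φ (h * k) y := by
  simp [map_mul]

variable (ξ : H) (a : A)

def affinePerm : Equiv.Perm A where
  toFun y := φ ξ y + a
  invFun y := φ ξ⁻¹ (y - a)
  left_inv y := by simp [φ.apply_apply_eq_mul_apply]
  right_inv y := by simp [φ.apply_apply_eq_mul_apply]

@[simp] lemma affinePerm_apply (y : A) : affinePerm φ ξ a y = φ ξ y + a := rfl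

@[simp] lemma affinePerm_inv_apply (y : A) : (affinePerm φ ξ a)⁻¹ y = φ ξ⁻¹ (y - a) := rfl

lemma affinePerm_zpow_apply (l : ℤ) (y : A) :
    (affinePerm φ ξ a ^ l) y = φ (ξ ^ l) y + (affinePerm φ ξ a ^ l) 0 := by
  induction l using Int.induction_on generalizing y with
  | zero => simp
  | succ l ih =>
    simp only [zpow_add_one, Equiv.Perm.mul_apply]
    rw [ih, ih (affinePerm φ ξ a 0)]
    simp only [affinePerm_apply, map_add, map_zero, zero_add, φ.apply_apply_eq_mul_apply]
    abel
  | pred l ih =>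
    simp only [zpow_sub_one, Equiv.Perm.mul_apply]
    rw [ih, ih ((affinePerm φ ξ a)⁻¹ 0)]
    simp only [affinePerm_inv_apply, map_sub, zero_sub, map_neg, φ.apply_apply_eq_mul_apply]
    abel

def intCocycle (l : ℤ) : A := (affinePerm φ ξ a ^ l) 0

lemma intCocycle_zero : intCocycle φ ξ a 0 = 0 := rfl

lemma intCocycle_one : intCocycle φ ξ a 1 = a := by simp [intCocycle]

lemma intCocycle_add (l m : ℤ) :
    intCocycle φ ξ a (l + m) = intCocycle φ ξ a l + φ (ξ ^ l) (intCocycle φ ξ a m) := by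
  rw [intCocycle, zpow_add, Equiv.Perm.mul_apply, affinePerm_zpow_apply, add_comm]
  rfl

lemma eq_intCocycle {f : ℤ → A} (hf_one : f 1 = a)
    (hf_add : ∀ l m, f (l + m) = f l + φ (ξ ^ l) (f m)) : f = intCocycle φ ξ a := by
  have hf_zero : f 0 = 0 := by simpa using hf_add 0 0
  have hperiodic : Function.Periodic (f - intCocycle φ ξ a) 1 := fun l => by
    simp only [Pi.sub_apply, hf_add l 1, intCocycle_add, hf_one, intCocycle_one]
    abel
  funext l
  simpa [hf_zero, intCocycle_zero, sub_eq_zero] using hperiodic.int_mul_eq l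

lemma intCocycle_mem {S : AddSubgroup A} (ha : a ∈ S) (hS : ∀ l : ℤ, ∀ x ∈ S, φ (ξ ^ l) x ∈ S)
    (l : ℤ) : intCocycle φ ξ a l ∈ S := by
  have step (l : ℤ) : intCocycle φ ξ a (l + 1) = intCocycle φ ξ a l + φ (ξ ^ l) a := by
    rw [intCocycle_add, intCocycle_one]
  induction l using Int.induction_on with
  | zero => exact S.zero_mem
  | succ l ih => rw [step]; exact S.add_mem ih (hS _ _ ha)
  | pred l ih =>
    rw [← sub_add_cancel (-(l : ℤ)) 1, step] at ih
    exact (S.add_mem_cancel_right (hS _ _ ha)).mp ih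

end IntCocycle

section Translation

variable {G M : Type*} [Group G] [AddCommGroup M] [DistribMulAction G M] (N : Subgroup G)

def oneCocycles : AddSubgroup (N → M) where
  carrier := {f | ∀ g h : N, f (g * h) = f g + (g : G) • f h}
  zero_mem' := by simp
  add_mem' {f f'} hf hf' g h := by
    simp only [Pi.add_apply]
    rw [hf g h, hf' g h, smul_add]
    abel
  neg_mem' {f} hf g h := by
    simp only [Pi.neg_apply]
    rw [hf g h, smul_neg, neg_add]

variable [N.Normal]

def cochainTranslate : G →* AddMonoid.End (N → M) where
  toFun x :=
    { toFun := fun f g => x • f (MulAut.conjNormal x⁻¹ g)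
      map_zero' := by ext; simp
      map_add' := fun f f' => by ext; simp [smul_add] }
  map_one' := by
    ext f g
    change (1 : G) • f (MulAut.conjNormal 1⁻¹ g) = f g
    simp
  map_mul' x y := by
    ext f g
    change (x * y) • f (MulAut.conjNormal (x * y)⁻¹ g) =
      x • y • f (MulAut.conjNormal y⁻¹ (MulAut.conjNormal x⁻¹ g))
    simp [mul_smul]

lemma cochainTranslate_apply (x : G) (f : N → M) (g : N) :
    cochainTranslate N x f g = x • f (MulAut.conjNormal x⁻¹ g) := rfl

lemma cochainTranslate_apply_mk (x : G) (f : N → M) (g : N) (hg : x⁻¹ * g * x ∈ N) :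
    cochainTranslate N x f g = x • f ⟨x⁻¹ * g * x, hg⟩ := by
  rw [cochainTranslate_apply]
  congr
  ext
  simp

lemma cochainTranslate_mem_oneCocycles (x : G) {f : N → M} (hf : f ∈ oneCocycles N) :
    cochainTranslate N x f ∈ oneCocycles N := by
  intro g h
  simp only [cochainTranslate_apply, map_mul]
  rw [hf, smul_add, smul_smul, smul_smul]
  congr 2
  simp [mul_assoc]

end Translation

section TwoCochain

variable {G M : Type*} [Group G] [AddCommGroup M] [DistribMulAction G M] (N : Subgroup G)
  [N.Normal] (ξ : G) (ρl : ℤ → N → M)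

/-- `twoCochain N ξ ρl g a h` is `ω (g * ξ ^ a) (h * ξ ^ b)`, which does not depend on `b`. -/
def twoCochain (g : N) (a : ℤ) (h : N) : M :=
  (g : G) • ρl a (MulAut.conjNormal (ξ ^ a) h)

lemma mul_zpow_mul_mul_zpow (g h : N) (a b : ℤ) :
    ((g : G) * ξ ^ a) * ((h : G) * ξ ^ b) =
      ((g * MulAut.conjNormal (ξ ^ a) h : N) : G) * ξ ^ (a + b) := by
  rw [Subgroup.coe_mul, MulAut.conjNormal_apply, zpow_add]
  group

lemma twoCochain_cocycle (hc : ∀ l, ρl l ∈ oneCocycles N)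
    (hadd : ∀ l m, ρl (l + m) = ρl l + cochainTranslate N (ξ ^ l) (ρl m))
    (g₁ g₂ g₃ : N) (a b : ℤ) :
    ((g₁ : G) * ξ ^ a) • twoCochain N ξ ρl g₂ b g₃
      - twoCochain N ξ ρl (g₁ * MulAut.conjNormal (ξ ^ a) g₂) (a + b) g₃
      + twoCochain N ξ ρl g₁ a (g₂ * MulAut.conjNormal (ξ ^ b) g₃)
      - twoCochain N ξ ρl g₁ a g₂ = 0 := by
  have hconj_add : MulAut.conjNormal (ξ ^ (a + b)) g₃ =
      MulAut.conjNormal (ξ ^ a) (MulAut.conjNormal (ξ ^ b) g₃) := by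
    rw [zpow_add, map_mul, MulAut.mul_apply]
  have hsplit_add : ρl (a + b) (MulAut.conjNormal (ξ ^ (a + b)) g₃) =
      ρl a (MulAut.conjNormal (ξ ^ (a + b)) g₃) + ξ ^ a • ρl b (MulAut.conjNormal (ξ ^ b) g₃) := by
    rw [hadd, Pi.add_apply, cochainTranslate_apply, hconj_add, map_inv, MulAut.inv_apply_self]
  have hsplit_mul : ρl a (MulAut.conjNormal (ξ ^ a) (g₂ * MulAut.conjNormal (ξ ^ b) g₃)) =
      ρl a (MulAut.conjNormal (ξ ^ a) g₂) +
        (MulAut.conjNormal (ξ ^ a) g₂ : G) • ρl a (MulAut.conjNormal (ξ ^ (a + b)) g₃) := by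
    rw [map_mul, hc a, hconj_add]
  have hcoeff : (g₁ : G) * ξ ^ a * g₂ = g₁ * MulAut.conjNormal (ξ ^ a) g₂ * ξ ^ a := by
    rw [MulAut.conjNormal_apply]
    group
  simp only [twoCochain, hsplit_add, hsplit_mul, Subgroup.coe_mul, smul_add, smul_smul, hcoeff]
  abel

end TwoCochain

/-- Let `N ⊴ G` with `G/N ≅ ℤ` generated by the image of `ξ` (every element of `G` is
uniquely `g ξ^l` with `g ∈ N`, `l ∈ ℤ`), let `M` be a `G`-module and `ρ : N → M` a
1-cocycle.  Then there is a unique family of 1-cocycles `(ρ_l)_{l ∈ ℤ}` with `ρ₀ = 0`,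
`ρ₁ = ρ` and `ρ_{l+m} = ρ_l + ξ^l ρ_m`, and the map
`ω(g₁ξ^{l₁}, g₂ξ^{l₂}) = g₁ • ρ_{l₁}(ξ^{l₁} g₂ ξ^{−l₁})` is a 2-cocycle on `G`. -/
theorem extend_one_cocycle {G M : Type*} [Group G] [AddCommGroup M] [DistribMulAction G M]
    (N : Subgroup G) (hN : N.Normal) (ξ : G)
    (hdec : ∀ x : G, ∃! q : N × ℤ, x = (q.1 : G) * ξ ^ q.2)
    (ρ : N → M) (hρ : ∀ g h : N, ρ (g * h) = ρ g + (g : G) • ρ h) :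
    (∃! ρl : ℤ → N → M,
      (∀ l : ℤ, ∀ g h : N, ρl l (g * h) = ρl l g + (g : G) • ρl l h) ∧
      ρl 0 = 0 ∧ ρl 1 = ρ ∧
      (∀ l m : ℤ, ∀ g : N,
        ρl (l + m) g = ρl l g + ξ ^ l •
          ρl m ⟨(ξ ^ l)⁻¹ * (g : G) * ξ ^ l, by
            simpa using hN.conj_mem (g : G) g.2 (ξ ^ l)⁻¹⟩)) ∧
    (∀ ρl : ℤ → N → M,
      ((∀ l : ℤ, ∀ g h : N, ρl l (g * h) = ρl l g + (g : G) • ρl l h) ∧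
        ρl 0 = 0 ∧ ρl 1 = ρ ∧
        (∀ l m : ℤ, ∀ g : N,
          ρl (l + m) g = ρl l g + ξ ^ l •
            ρl m ⟨(ξ ^ l)⁻¹ * (g : G) * ξ ^ l, by
              simpa using hN.conj_mem (g : G) g.2 (ξ ^ l)⁻¹⟩)) →
      ∃ ω : G → G → M,
        (∀ (g₁ g₂ : N) (l₁ l₂ : ℤ),
          ω ((g₁ : G) * ξ ^ l₁) ((g₂ : G) * ξ ^ l₂) =
            (g₁ : G) • ρl l₁ ⟨ξ ^ l₁ * (g₂ : G) * (ξ ^ l₁)⁻¹,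
              hN.conj_mem (g₂ : G) g₂.2 (ξ ^ l₁)⟩) ∧
        (∀ x y z : G, x • ω y z - ω (x * y) z + ω x (y * z) - ω x y = 0)) := by
  have hadd_iff (ρl : ℤ → N → M) :
      (∀ l m g, ρl (l + m) g = ρl l g + cochainTranslate N (ξ ^ l) (ρl m) g) ↔
        ∀ l m, ρl (l + m) = ρl l + cochainTranslate N (ξ ^ l) (ρl m) := by
    simp only [funext_iff, Pi.add_apply]
  simp only [← cochainTranslate_apply_mk, hadd_iff]
  have hfamily_mem (l : ℤ) : intCocycle (cochainTranslate N) ξ ρ l ∈ oneCocycles N :=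
    intCocycle_mem (cochainTranslate N) ξ ρ (S := oneCocycles N) hρ
      (fun l _ hf => cochainTranslate_mem_oneCocycles N (ξ ^ l) hf) l
  refine ⟨⟨intCocycle (cochainTranslate N) ξ ρ, ⟨hfamily_mem, intCocycle_zero .., intCocycle_one ..,
      intCocycle_add _ _ _⟩, fun ρl ⟨_, _, h1, hadd⟩ => eq_intCocycle _ _ _ h1 hadd⟩, ?_⟩
  rintro ρl ⟨hc, -, -, hadd⟩
  choose dec hdec_eq hdec_unique using hdec
  have dec_mk (g : N) (l : ℤ) : dec (g * ξ ^ l) = (g, l) := (hdec_unique _ (g, l) rfl).symm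
  refine ⟨fun x y => twoCochain N ξ ρl (dec x).1 (dec x).2 (dec y).1, fun g₁ g₂ l₁ l₂ => ?_,
    fun x y z => ?_⟩
  · simp only [dec_mk, twoCochain]
    congr
  obtain ⟨⟨g₁, a⟩, rfl⟩ : ∃ q : N × ℤ, x = q.1 * ξ ^ q.2 := ⟨dec x, hdec_eq x⟩
  obtain ⟨⟨g₂, b⟩, rfl⟩ : ∃ q : N × ℤ, y = q.1 * ξ ^ q.2 := ⟨dec y, hdec_eq y⟩
  obtain ⟨⟨g₃, c⟩, rfl⟩ : ∃ q : N × ℤ, z = q.1 * ξ ^ q.2 := ⟨dec z, hdec_eq z⟩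
  simp only [mul_zpow_mul_mul_zpow, dec_mk]
  exact twoCochain_cocycle N ξ ρl hc hadd g₁ g₂ g₃ a b
end

section
/- Let M be an abelian group regarded as a trivial Z²-module. Then the second group cohomology H²(Z², M) is isomorphic to M. -/
/-!
For a 2-cocycle `ρ` of an abelian group `G` with trivial coefficients, the commutator pairing
`(g, h) ↦ ρ(g, h) - ρ(h, g)` is bi-additive, alternating, and vanishes on coboundaries; on `ℤ²` it
is therefore `det(g, h) • (ρ(e₁, e₂) - ρ(e₂, e₁))`. A cocycle whose pairing vanishes is symmetric,
hence the factor set of an abelian extension of `G` by `M`; when `G` is projective over `ℤ` the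
extension splits, and a section exhibits `ρ` as a coboundary. The cocycle `(g, h) ↦ g₁ h₂ • m`
has pairing `m` at `(e₁, e₂)`, so `m ↦ [(g, h) ↦ g₁ h₂ • m]` is an isomorphism `M ≃ H²(ℤ², M)`.
-/

open groupCohomology Multiplicative

namespace H2TrivialFreeAbelian

section Extension

/-- Carrier of the abelian extension of `G` by `M` with factor set `F`. -/
@[ext]
structure CocycleExt {G M : Type*} (F : G → G → M) where
  fst : M
  snd : G

variable {G M : Type*} [AddCommGroup G] [AddCommGroup M] {F : G → G → M}
  (hF : ∀ g h j, F (g + h) j + F g h = F h j + F g (h + j)) (hsym : ∀ g h, F g h = F h g)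

include hF in
lemma apply_zero_left_of_cocycle (j : G) : F 0 j = F 0 0 := by
  simpa using (hF 0 0 j).symm

abbrev CocycleExt.addCommGroup : AddCommGroup (CocycleExt F) :=
  letI : Add (CocycleExt F) := ⟨fun x y => ⟨x.fst + y.fst + F x.snd y.snd, x.snd + y.snd⟩⟩
  letI : Zero (CocycleExt F) := ⟨⟨-F 0 0, 0⟩⟩
  letI : Neg (CocycleExt F) := ⟨fun x => ⟨-x.fst - F x.snd (-x.snd) - F 0 0, -x.snd⟩⟩
  { nsmul := nsmulRec
    zsmul := zsmulRec
    add_assoc x y z := by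
      ext
      · change x.fst + y.fst + F x.snd y.snd + z.fst + F (x.snd + y.snd) z.snd =
          x.fst + (y.fst + z.fst + F y.snd z.snd) + F x.snd (y.snd + z.snd)
        linear_combination (norm := abel) hF x.snd y.snd z.snd
      · exact add_assoc x.snd y.snd z.snd
    zero_add x := by
      ext
      · change -F 0 0 + x.fst + F 0 x.snd = x.fst
        rw [apply_zero_left_of_cocycle hF x.snd]; abel
      · exact zero_add x.snd
    add_zero x := by
      ext
      · change x.fst + -F 0 0 + F x.snd 0 = x.fst
        rw [hsym x.snd, apply_zero_left_of_cocycle hF x.snd]; abel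
      · exact add_zero x.snd
    neg_add_cancel x := by
      ext
      · change -x.fst - F x.snd (-x.snd) - F 0 0 + x.fst + F (-x.snd) x.snd = -F 0 0
        rw [hsym (-x.snd)]; abel
      · exact neg_add_cancel x.snd
    add_comm x y := by
      ext
      · change x.fst + y.fst + F x.snd y.snd = y.fst + x.fst + F y.snd x.snd
        rw [hsym x.snd]; abel
      · exact add_comm x.snd y.snd }

include hF hsym in
theorem exists_eq_sub_of_symm [Module.Projective ℤ G] :
    ∃ y : G → M, ∀ g h, F g h = y (g + h) - y g - y h := by
  let := CocycleExt.addCommGroup hF hsym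
  let π : CocycleExt F →+ G := ⟨⟨CocycleExt.snd, rfl⟩, fun _ _ => rfl⟩
  obtain ⟨s, hs⟩ := Module.projective_lifting_property π.toIntLinearMap LinearMap.id
    fun g => ⟨⟨0, g⟩, rfl⟩
  have hπs (g : G) : (s g).snd = g := LinearMap.congr_fun hs g
  refine ⟨fun g => (s g).fst, fun g h => ?_⟩
  have hfst : (s g).fst + (s h).fst + F (s g).snd (s h).snd = (s (g + h)).fst :=
    congrArg CocycleExt.fst (map_add s g h).symm
  rw [hπs, hπs] at hfst
  simp only [← hfst]; abel

end Extension

section Skew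

variable {G M : Type*} [AddCommGroup M]

def skew (f : Multiplicative G × Multiplicative G → M) (g h : G) : M :=
  f (ofAdd g, ofAdd h) - f (ofAdd h, ofAdd g)

lemma skew_swap (f : Multiplicative G × Multiplicative G → M) (g h : G) :
    skew f g h = -skew f h g :=
  (neg_sub _ _).symm

lemma skew_self (f : Multiplicative G × Multiplicative G → M) (g : G) : skew f g g = 0 :=
  sub_self _

lemma skew_sub (f f' : Multiplicative G × Multiplicative G → M) (g h : G) :
    skew (f - f') g h = skew f g h - skew f' g h := by
  simp only [skew, Pi.sub_apply]; abel

end Skew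

section TrivialCoefficients

universe u v

variable {k G : Type u} {M : Type v} [CommRing k] [AddCommGroup G] [AddCommGroup M] [Module k M]

lemma cocycles₂_trivial_add (f : cocycles₂ (Rep.trivial k (Multiplicative G) M)) (g h j : G) :
    f (ofAdd (g + h), ofAdd j) + f (ofAdd g, ofAdd h) =
      f (ofAdd h, ofAdd j) + f (ofAdd g, ofAdd (h + j)) :=
  (mem_cocycles₂_iff f).1 f.2 (ofAdd g) (ofAdd h) (ofAdd j)

lemma skew_add_left (f : cocycles₂ (Rep.trivial k (Multiplicative G) M)) (g h j : G) :
    skew f (g + h) j = skew f g j + skew f h j := by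
  have hghj := cocycles₂_trivial_add f g h j
  have hjgh := cocycles₂_trivial_add f j g h
  have hgjh := cocycles₂_trivial_add f g j h
  rw [add_comm j g, add_comm j h] at *
  unfold skew
  linear_combination (norm := abel) hghj + hjgh - hgjh

lemma skew_add_right (f : cocycles₂ (Rep.trivial k (Multiplicative G) M)) (g h j : G) :
    skew f g (h + j) = skew f g h + skew f g j := by
  rw [skew_swap, skew_add_left, neg_add, ← skew_swap, ← skew_swap]

def skewForm (f : cocycles₂ (Rep.trivial k (Multiplicative G) M)) : G →+ G →+ M :=
  .mk' (fun g => .mk' (skew f g) (skew_add_right f g)) fun g h => by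
    ext j; exact skew_add_left f g h j

lemma skew_eq_zero_of_mem_coboundaries₂ {f : Multiplicative G × Multiplicative G → M}
    (hf : f ∈ coboundaries₂ (Rep.trivial k (Multiplicative G) M)) (g h : G) : skew f g h = 0 := by
  obtain ⟨x, rfl⟩ := hf
  simp only [skew, d₁₂_hom_apply, Representation.trivial_apply, ← ofAdd_add, add_comm g h]
  abel

theorem mem_coboundaries₂_of_symm [Module.Projective ℤ G]
    (f : cocycles₂ (Rep.trivial k (Multiplicative G) M))
    (hsym : ∀ g h : G, f (ofAdd g, ofAdd h) = f (ofAdd h, ofAdd g)) :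
    ⇑f ∈ coboundaries₂ (Rep.trivial k (Multiplicative G) M) := by
  obtain ⟨y, hy⟩ := exists_eq_sub_of_symm (cocycles₂_trivial_add f) hsym
  refine ⟨fun g => -y g.toAdd, funext fun ⟨g, h⟩ => ?_⟩
  simp only [d₁₂_hom_apply, Representation.trivial_apply, toAdd_mul]
  rw [show f (g, h) = _ from hy g.toAdd h.toAdd]
  abel

end TrivialCoefficients

section ProdInt

variable {k M : Type} [CommRing k] [AddCommGroup M] [Module k M]

lemma skew_eq_smul (f : cocycles₂ (Rep.trivial k (Multiplicative (ℤ × ℤ)) M)) (g h : ℤ × ℤ) :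
    skew f g h = (g.1 * h.2 - g.2 * h.1) • skew f (1, 0) (0, 1) := by
  have hbasis (x : ℤ × ℤ) : x = x.1 • (1, 0) + x.2 • (0, 1) := by ext <;> simp
  calc skew f g h
      = skewForm f (g.1 • (1, 0) + g.2 • (0, 1)) (h.1 • (1, 0) + h.2 • (0, 1)) := by
        rw [← hbasis g, ← hbasis h]; rfl
    _ = (g.1 * h.2 - g.2 * h.1) • skew f (1, 0) (0, 1) := by
        simp only [skewForm, map_add, map_zsmul, AddMonoidHom.add_apply, AddMonoidHom.smul_apply,
          AddMonoidHom.mk'_apply, skew_self, skew_swap f (0, 1) (1, 0)]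
        module

/-- The cup product of the two coordinate projections `ℤ² → ℤ`, with coefficient `m`. -/
def cupCocycle : M →ₗ[k] cocycles₂ (Rep.trivial k (Multiplicative (ℤ × ℤ)) M) where
  toFun m := ⟨fun p => (p.1.toAdd.1 * p.2.toAdd.2) • m, (mem_cocycles₂_iff _).2 fun g h j => by
    simp only [toAdd_mul, Prod.fst_add, Prod.snd_add, Representation.trivial_apply, ← add_smul]
    congr 1; ring⟩
  map_add' m m' := cocycles₂_ext fun g h => smul_add _ m m'
  map_smul' c m := cocycles₂_ext fun g h => smul_comm _ c m

lemma cupCocycle_apply (m : M) (g h : Multiplicative (ℤ × ℤ)) :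
    cupCocycle (k := k) m (g, h) = (g.toAdd.1 * h.toAdd.2) • m :=
  rfl

lemma skew_cupCocycle (m : M) : skew (cupCocycle (k := k) m) (1, 0) (0, 1) = m := by
  simp [skew, cupCocycle_apply]

lemma bijective_H2π_comp_cupCocycle :
    Function.Bijective ((H2π (Rep.trivial k (Multiplicative (ℤ × ℤ)) M)).hom ∘ₗ cupCocycle) := by
  refine ⟨fun m m' hm => ?_, fun x => ?_⟩
  · have hskew := skew_eq_zero_of_mem_coboundaries₂ ((H2π_eq_iff _ _).1 hm) (1, 0) (0, 1)
    rwa [skew_sub, skew_cupCocycle, skew_cupCocycle, sub_eq_zero] at hskew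
  · induction x using H2_induction_on with | h f =>
    let m := skew f (1, 0) (0, 1)
    refine ⟨m, (H2π_eq_iff _ _).2 <| mem_coboundaries₂_of_symm (cupCocycle m - f) fun g h => ?_⟩
    rw [← sub_eq_zero]
    change skew (⇑(cupCocycle m) - ⇑f) g h = 0
    rw [skew_sub, skew_eq_smul f, skew_eq_smul (cupCocycle _), skew_cupCocycle, sub_self]

noncomputable def H2ProdIntEquivOfTrivial :
    H2 (Rep.trivial k (Multiplicative (ℤ × ℤ)) M) ≃ₗ[k] M :=
  (LinearEquiv.ofBijective _ bijective_H2π_comp_cupCocycle).symm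

end ProdInt

end H2TrivialFreeAbelian

/-- For any abelian group `M` regarded as a trivial `ℤ²`-module, the second group
cohomology `H²(ℤ², M)` is isomorphic to `M`. -/
theorem h2_of_Z2_trivial_coefficients (M : Type) [AddCommGroup M] :
    Nonempty ((groupCohomology (Rep.trivial ℤ (Multiplicative (ℤ × ℤ)) M) 2) ≃ₗ[ℤ] M) :=
  ⟨H2TrivialFreeAbelian.H2ProdIntEquivOfTrivial⟩
end

section
/- Let A be a unital C*-algebra in which any two non-zero projections with the same K₀-class are Murray–von Neumann equivalent, let (α,u) be a cocycle action of a group G on A, and let p ∈ A be a non-zero projection whose K₀-class is fixed by K₀(α_g) for all g ∈ G. Choose partial isometries x_g ∈ A with x_g x_g* = p and x_g* x_g = α_g(p). Then α^x_g(a) := x_g α_g(a) x_g* defines automorphisms of the corner pAp (for a ∈ pAp), u^x(g,h) := x_g α_g(x_h) u(g,h) x_{gh}* are unitaries of pAp, and (α^x, u^x) is a cocycle action of G on pAp. Moreover, if (y_g) is another choice of such partial isometries, then (α^y, u^y) is the cocycle perturbation of (α^x, u^x) by the unitaries (y_g x_g*) of pAp. -/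
/-- Let `A` be a unital C*-algebra in which any two non-zero projections with the same
`K₀`-class (measured by an abstract class map `k0` into some type `K`) are Murray–von
Neumann equivalent, let `(α,u)` be a cocycle action of `G` on `A`, and let `p` be a
non-zero projection whose `K₀`-class is fixed by every `K₀(α_g)`.  Choosing partial
isometries `x_g` with `x_g x_g* = p`, `x_g* x_g = α_g(p)` (normalized by `x_1 = p`), the
maps `α^x_g(a) = x_g α_g(a) x_g*` and unitaries `u^x(g,h) = x_g α_g(x_h) u(g,h) x_{gh}*`
form a cocycle action of `G` on the corner `pAp`; and for another choice `(y_g)`,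
`(α^y, u^y)` is the cocycle perturbation of `(α^x, u^x)` by the unitaries
`w_g = y_g x_g*` of `pAp`. -/
theorem corner_cocycle_action {G A K : Type*} [Group G]
    [NormedRing A] [StarRing A] [CStarRing A]
    [NormedAlgebra ℂ A] [CompleteSpace A] [StarModule ℂ A]
    (α : G → A ≃⋆ₐ[ℂ] A) (u : G → G → A)
    (hcc : IsCocycleActionFun (fun g a => α g a) u)
    (k0 : A → K)
    (hMvN : ∀ p q : A, IsIdempotentElem p → IsSelfAdjoint p →
      IsIdempotentElem q → IsSelfAdjoint q → p ≠ 0 → q ≠ 0 → k0 p = k0 q →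
      ∃ x : A, x * star x = p ∧ star x * x = q)
    (p : A) (hp : IsIdempotentElem p) (hpsa : IsSelfAdjoint p) (hp0 : p ≠ 0)
    (hfix : ∀ g : G, k0 (α g p) = k0 p)
    (x : G → A)
    (hx : ∀ g, x g * star (x g) = p ∧ star (x g) * x g = α g p)
    (hx1 : x 1 = p) :
    -- `α^x_g` maps the corner `pAp` into itself
    (∀ (g : G) (a : A), p * a = a → a * p = a →
      p * (x g * α g a * star (x g)) = x g * α g a * star (x g) ∧
      (x g * α g a * star (x g)) * p = x g * α g a * star (x g)) ∧
    -- `u^x(g,h)` is a unitary of the corner `pAp` (whose unit is `p`)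
    (∀ g h : G,
      p * (x g * α g (x h) * u g h * star (x (g * h))) =
        x g * α g (x h) * u g h * star (x (g * h)) ∧
      (x g * α g (x h) * u g h * star (x (g * h))) * p =
        x g * α g (x h) * u g h * star (x (g * h)) ∧
      (x g * α g (x h) * u g h * star (x (g * h))) *
        star (x g * α g (x h) * u g h * star (x (g * h))) = p ∧
      star (x g * α g (x h) * u g h * star (x (g * h))) *
        (x g * α g (x h) * u g h * star (x (g * h))) = p) ∧
    -- `α^x_g ∘ α^x_h = Ad u^x(g,h) ∘ α^x_{gh}` on the corner
    (∀ (g h : G) (a : A), p * a = a → a * p = a →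
      x g * α g (x h * α h a * star (x h)) * star (x g) =
        (x g * α g (x h) * u g h * star (x (g * h))) *
          (x (g * h) * α (g * h) a * star (x (g * h))) *
          star (x g * α g (x h) * u g h * star (x (g * h)))) ∧
    -- the 2-cocycle identity for `u^x`
    (∀ g h k' : G,
      (x g * α g (x h) * u g h * star (x (g * h))) *
        (x (g * h) * α (g * h) (x k') * u (g * h) k' * star (x (g * h * k'))) =
      (x g * α g (x h * α h (x k') * u h k' * star (x (h * k'))) * star (x g)) *
        (x g * α g (x (h * k')) * u g (h * k') * star (x (g * (h * k'))))) ∧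
    -- normalization: `α^x_1 = id` on the corner and `u^x(g,1) = u^x(1,g) = p`
    (∀ a : A, p * a = a → a * p = a → x 1 * α 1 a * star (x 1) = a) ∧
    (∀ g : G, x g * α g (x 1) * u g 1 * star (x g) = p ∧
      x 1 * α 1 (x g) * u 1 g * star (x g) = p) ∧
    -- a second choice `(y_g)` yields the cocycle perturbation by `w_g = y_g x_g*`
    (∀ y : G → A,
      (∀ g, y g * star (y g) = p ∧ star (y g) * y g = α g p) → y 1 = p →
      (∀ g : G,
        p * (y g * star (x g)) = y g * star (x g) ∧
        (y g * star (x g)) * p = y g * star (x g) ∧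
        (y g * star (x g)) * star (y g * star (x g)) = p ∧
        star (y g * star (x g)) * (y g * star (x g)) = p) ∧
      (∀ (g : G) (a : A), p * a = a → a * p = a →
        y g * α g a * star (y g) =
          (y g * star (x g)) * (x g * α g a * star (x g)) * star (y g * star (x g))) ∧
      (∀ g h : G,
        y g * α g (y h) * u g h * star (y (g * h)) =
          (y g * star (x g)) *
            (x g * α g (y h * star (x h)) * star (x g)) *
            (x g * α g (x h) * u g h * star (x (g * h))) *
            star (y (g * h) * star (x (g * h))))) := by

  obtain ⟨huu, hAd0, hco0, hone0, hnorm0⟩ := hcc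
  have hAd : ∀ g h a, (α g) ((α h) a) = u g h * (α (g*h)) a * star (u g h) := hAd0
  have hco : ∀ g h k, u g h * u (g*h) k = (α g) (u h k) * u g (h*k) := hco0
  have hone : ∀ a : A, (α (1:G)) a = a := hone0
  have hnorm : ∀ g : G, u g 1 = 1 ∧ u 1 g = 1 := hnorm0
  have hpp : p * p = p := hp
  have hps : star p = p := hpsa
  have hu₂ : ∀ g h, star (u g h) * u g h = 1 := fun g h => (Unitary.mem_iff.mp (huu g h)).1
  have hu₁ : ∀ g h, u g h * star (u g h) = 1 := fun g h => (Unitary.mem_iff.mp (huu g h)).2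
  have L : ∀ {a b c : A}, a * b = c → ∀ t : A, a * (b * t) = c * t := by
    intro a b c h t; rw [← mul_assoc, h]
  have L2 : ∀ {a b c d : A}, a * b * c = d → ∀ t : A, a * (b * (c * t)) = d * t := by
    intro a b c d h t; rw [← mul_assoc, ← mul_assoc, h]
  have L' : ∀ {a b c d : A}, a * b = c * d → ∀ t : A, a * (b * t) = c * (d * t) := by
    intro a b c d h t; rw [← mul_assoc, h, mul_assoc]
  have αmul : ∀ (g : G) {a b c : A}, a * b = c → (α g) a * (α g) b = (α g) c := by
    intro g a b c h; rw [← map_mul]; exact congrArg _ h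
  have αmul2 : ∀ (g : G) {a b c d : A}, a * b = c * d →
      (α g) a * (α g) b = (α g) c * (α g) d := by
    intro g a b c d h; rw [← map_mul, ← map_mul]; exact congrArg _ h
  have key : ∀ z : A, z * star z = p → p * z = z := by
    intro z hz
    have e0 : (z - p * z) * (star z - star z * p) =
        z * star z - z * star z * p - p * (z * star z) + p * (z * star z) * p := by
      noncomm_ring
    have e : (z - p * z) * star (z - p * z) = 0 := by
      rw [star_sub, star_mul, hps, e0, hz, hpp, hpp]
      abel
    have hz0 : z - p * z = 0 := (CStarRing.mul_star_self_eq_zero_iff _).mp e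
    exact (sub_eq_zero.mp hz0).symm
  have facts : ∀ (z : G → A), (∀ g, z g * star (z g) = p ∧ star (z g) * z g = (α g) p) →
      ∀ g, p * z g = z g ∧ z g * (α g) p = z g ∧ star (z g) * p = star (z g) ∧
        (α g) p * star (z g) = star (z g) := by
    intro z hz g
    have h1 : p * z g = z g := key _ (hz g).1
    have h2 : z g * (α g) p = z g := by rw [← (hz g).2, ← mul_assoc, (hz g).1, h1]
    have h3 : star (z g) * p = star (z g) := by
      have := congrArg star h1; rwa [star_mul, hps] at this
    have h4 : (α g) p * star (z g) = star (z g) := by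
      have := congrArg star h2; rwa [star_mul, ← map_star, hps] at this
    exact ⟨h1, h2, h3, h4⟩
  have F := facts x hx
  have hAd' : ∀ g h a, (α g) ((α h) a) * u g h = u g h * (α (g*h)) a := by
    intro g h a
    rw [hAd g h a, mul_assoc, mul_assoc, hu₂ g h, mul_one]
  have hAdInv : ∀ g h a, star (u g h) * (α g) ((α h) a) * u g h = (α (g*h)) a := by
    intro g h a
    rw [hAd g h a, ← mul_assoc, ← mul_assoc, hu₂ g h, one_mul, mul_assoc, hu₂ g h, mul_one]
  refine ⟨?_, ?_, ?_, ?_, ?_, ?_, ?_⟩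
  · -- corner preserved
    intro g a ha1 ha2
    constructor
    · rw [← mul_assoc, ← mul_assoc, (F g).1]
    · rw [mul_assoc, (F g).2.2.1]
  · -- unitarity of u^x
    intro g h
    refine ⟨?_, ?_, ?_, ?_⟩
    · rw [← mul_assoc, ← mul_assoc, ← mul_assoc, (F g).1]
    · rw [mul_assoc, (F (g*h)).2.2.1]
    · simp only [star_mul, star_star, ← map_star, mul_assoc]
      rw [L (hx (g*h)).2, L2 (hAd g h p).symm, L (αmul g (F h).2.1),
        L (αmul g (hx h).1), L (F g).2.1, (hx g).1]
    · simp only [star_mul, star_star, ← map_star, mul_assoc]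
      rw [L (hx g).2, L (αmul g (F h).2.2.1), L (αmul g (hx h).2),
        L2 (hAdInv g h p), L (F (g*h)).2.1, (hx (g*h)).1]
  · -- composition
    intro g h a ha1 ha2
    simp only [star_mul, star_star, ← map_star, map_mul, mul_assoc]
    rw [L (hx (g*h)).2, L (αmul (g*h) ha1), L (hx (g*h)).2, L (αmul (g*h) ha2),
      L2 (hAd g h a).symm]
  · -- 2-cocycle identity
    intro g h k'
    simp only [map_mul, mul_assoc]
    rw [L (hx (g*h)).2, L (αmul (g*h) (F k').1)]
    rw [L (hx g).2, L (αmul g (F (h*k')).2.2.1), L (αmul g (hx (h*k')).2),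
      L' (αmul2 g (hAd' h k' p).symm), L (αmul g (αmul h (F k').2.1)),
      L' (hco g h k').symm, L' (hAd' g h (x k'))]
  · -- α^x_1 = id
    intro a ha1 ha2
    rw [hx1, hone a, hps, ha1, ha2]
  · -- normalization of u^x
    intro g
    constructor
    · rw [hx1, (hnorm g).1, mul_one, (F g).2.1, (hx g).1]
    · rw [hx1, hone (x g), (hnorm g).2, mul_one, (F g).1, (hx g).1]
  · -- perturbation
    intro y hy hy1
    have Fy := facts y hy
    refine ⟨?_, ?_, ?_⟩
    · intro g
      refine ⟨?_, ?_, ?_, ?_⟩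
      · rw [← mul_assoc, (Fy g).1]
      · rw [mul_assoc, (F g).2.2.1]
      · simp only [star_mul, star_star, mul_assoc]
        rw [L (hx g).2, (Fy g).2.2.2, (hy g).1]
      · simp only [star_mul, star_star, mul_assoc]
        rw [L (hy g).2, (F g).2.2.2, (hx g).1]
    · intro g a ha1 ha2
      simp only [star_mul, star_star, mul_assoc]
      rw [L (hx g).2, L (αmul g ha1), L (hx g).2, L (αmul g ha2)]
    · intro g h
      simp only [star_mul, star_star, map_mul, ← map_star, mul_assoc]
      rw [L (hx g).2, L (αmul g (Fy h).1), L (hx g).2, L (αmul g (F h).2.2.1),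
        L (αmul g (hx h).2), L (αmul g (Fy h).2.1), L (hx (g*h)).2,
        (Fy (g*h)).2.2.2]
end

section
/- Let G be a group, N ⊴ G normal with G/N ≅ Z generated by the image of ξ ∈ G. Let (α,u) be a cocycle action of G on a unital C*-algebra A (or an abstract group of unitaries) such that u(g,h) = 1 and u(gξˡ, ξᵐ) = 1 for all g,h ∈ N and l,m ∈ Z. Define ǔ_{l,g} := u(ξˡ, ξ⁻ˡgξˡ) for l ∈ Z, g ∈ N. Then for each l, the family (ǔ_{l,g})_{g∈N} is an α|N-cocycle, satisfies α_{ξˡ} ∘ α_{ξ⁻ˡgξˡ} ∘ α_{ξˡ}⁻¹ = Ad ǔ_{l,g} ∘ α_g, and the composition rule α_{ξˡ}(ǔ_{m, ξ⁻ˡgξˡ}) ǔ_{l,g} = ǔ_{l+m, g} holds for all l,m ∈ Z and g ∈ N. -/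
/-- Let `N ⊴ G` with `G/N ≅ ℤ` generated by the image of `ξ` (every element of `G` is
uniquely `g ξ^l`, `g ∈ N`, `l ∈ ℤ`).  Let `(α,u)` be a cocycle action of `G` on a unital
C*-algebra `A` with `u(g,h) = 1` and `u(gξˡ, ξᵐ) = 1` for all `g,h ∈ N`, `l,m ∈ ℤ`.
Then for `ǔ_{l,g} = u(ξˡ, ξ⁻ˡgξˡ)`: each family `(ǔ_{l,g})_{g ∈ N}` is an `α|N`-cocycle,
`α_{ξˡ} ∘ α_{ξ⁻ˡgξˡ} ∘ α_{ξˡ}⁻¹ = Ad ǔ_{l,g} ∘ α_g`, and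
`α_{ξˡ}(ǔ_{m, ξ⁻ˡgξˡ}) ǔ_{l,g} = ǔ_{l+m, g}`. -/
theorem iterated_check_cocycle {G A : Type*} [Group G]
    [NormedRing A] [StarRing A] [CStarRing A]
    [NormedAlgebra ℂ A] [CompleteSpace A] [StarModule ℂ A]
    (N : Subgroup G) (hN : N.Normal) (ξ : G)
    (hdec : ∀ x : G, ∃! q : N × ℤ, x = (q.1 : G) * ξ ^ q.2)
    (α : G → A ≃⋆ₐ[ℂ] A) (u : G → G → A)
    (hcc : IsCocycleActionFun (fun g a => α g a) u)
    (huN : ∀ g ∈ N, ∀ h ∈ N, u g h = 1)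
    (huξ : ∀ g ∈ N, ∀ l m : ℤ, u (g * ξ ^ l) (ξ ^ m) = 1) :
    (∀ l : ℤ, ∀ g ∈ N, ∀ h ∈ N,
      u (ξ ^ l) (ξ ^ (-l) * g * ξ ^ l) * α g (u (ξ ^ l) (ξ ^ (-l) * h * ξ ^ l)) =
        u (ξ ^ l) (ξ ^ (-l) * (g * h) * ξ ^ l)) ∧
    (∀ l : ℤ, ∀ g ∈ N, ∀ a : A,
      α (ξ ^ l) (α (ξ ^ (-l) * g * ξ ^ l) ((α (ξ ^ l)).symm a)) =
        u (ξ ^ l) (ξ ^ (-l) * g * ξ ^ l) * α g a *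
          star (u (ξ ^ l) (ξ ^ (-l) * g * ξ ^ l))) ∧
    (∀ l m : ℤ, ∀ g ∈ N,
      α (ξ ^ l) (u (ξ ^ m) (ξ ^ (-m) * (ξ ^ (-l) * g * ξ ^ l) * ξ ^ m)) *
          u (ξ ^ l) (ξ ^ (-l) * g * ξ ^ l) =
        u (ξ ^ (l + m)) (ξ ^ (-(l + m)) * g * ξ ^ (l + m))) := by
  obtain ⟨huu, hact, hcoc, hone, hnorm⟩ := hcc
  have hconj : ∀ (l : ℤ), ∀ g ∈ N, ξ ^ (-l) * g * ξ ^ l ∈ N := by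
    intro l g hg
    have := hN.conj_mem g hg (ξ ^ (-l))
    simpa [zpow_neg] using this
  -- u(h, ξ^m) = 1 for h ∈ N
  have hu2 : ∀ h ∈ N, ∀ m : ℤ, u h (ξ ^ m) = 1 := by
    intro h hh m
    have := huξ h hh 0 m
    simpa using this
  -- u(g, h * ξ^m) = 1 for g, h ∈ N
  have hu3 : ∀ g ∈ N, ∀ h ∈ N, ∀ m : ℤ, u g (h * ξ ^ m) = 1 := by
    intro g hg h hh m
    have h1 := hcoc g h (ξ ^ m)
    rw [huN g hg h hh, hu2 (g * h) (mul_mem hg hh) m, hu2 h hh m] at h1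
    simpa using h1.symm
  -- u(ξ^l, ξ^m) = 1
  have hu4 : ∀ l m : ℤ, u (ξ ^ l) (ξ ^ m) = 1 := by
    intro l m
    have := huξ 1 (one_mem N) l m
    simpa using this
  refine ⟨?_, ?_, ?_⟩
  · -- cocycle identity
    intro l g hg h hh
    set g' := ξ ^ (-l) * g * ξ ^ l with hg'
    set h' := ξ ^ (-l) * h * ξ ^ l with hh'
    have hg'N : g' ∈ N := hconj l g hg
    have hh'N : h' ∈ N := hconj l h hh
    have e1 : ξ ^ l * g' = g * ξ ^ l := by rw [hg']; group
    have e2 : ξ ^ l * h' = h * ξ ^ l := by rw [hh']; group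
    have e3 : g' * h' = ξ ^ (-l) * (g * h) * ξ ^ l := by rw [hg', hh']; group
    -- u(g * ξ^l, h') = α_g (u(ξ^l, h'))
    have key : u (g * ξ ^ l) h' = α g (u (ξ ^ l) h') := by
      have h2 := hcoc g (ξ ^ l) h'
      rw [hu2 g hg l, one_mul] at h2
      have : ξ ^ l * h' = h * ξ ^ l := e2
      rw [this, hu3 g hg h hh l, mul_one] at h2
      exact h2
    have h1 := hcoc (ξ ^ l) g' h'
    rw [huN g' hg'N h' hh'N, e1, key, e3] at h1
    simpa using h1
  · -- conjugation identity
    intro l g hg a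
    set g' := ξ ^ (-l) * g * ξ ^ l with hg'
    have e1 : ξ ^ l * g' = g * ξ ^ l := by rw [hg']; group
    have h1 := hact (ξ ^ l) g' ((α (ξ ^ l)).symm a)
    rw [e1] at h1
    have h2 := hact g (ξ ^ l) ((α (ξ ^ l)).symm a)
    rw [hu2 g hg l, one_mul, star_one, mul_one] at h2
    simp only at h2
    rw [(α (ξ ^ l)).apply_symm_apply a] at h2
    simp only at h1 ⊢
    rw [h1, ← h2]
  · -- composition rule
    intro l m g hg
    set g' := ξ ^ (-l) * g * ξ ^ l with hg'
    have hg'N : g' ∈ N := hconj l g hg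
    set k := ξ ^ (-m) * g' * ξ ^ m with hk
    have e1 : ξ ^ l * ξ ^ m = ξ ^ (l + m) := (zpow_add ξ l m).symm
    have e2 : ξ ^ m * k = g' * ξ ^ m := by rw [hk]; group
    have e3 : ξ ^ l * g' = g * ξ ^ l := by rw [hg']; group
    have e4 : ξ ^ (-(l + m)) * g * ξ ^ (l + m) = k := by rw [hk, hg']; group
    -- u(ξ^l, g' * ξ^m) = u(ξ^l, g')
    have key : u (ξ ^ l) (g' * ξ ^ m) = u (ξ ^ l) g' := by
      have h2 := hcoc (ξ ^ l) g' (ξ ^ m)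
      rw [e3] at h2
      rw [huξ g hg l m, mul_one, hu2 g' hg'N m] at h2
      simpa using h2.symm
    have h1 := hcoc (ξ ^ l) (ξ ^ m) k
    rw [hu4 l m, one_mul, e1, e2, key] at h1
    rw [e4]
    exact h1.symm
end
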